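/- Let α ∈ (0,1). Then the function G(z) = 1 − (1 − H(z))^α is the generating function of a quasi-stationary distribution with eigenvalue m^α: there exist nonnegative reals ν(n), n ≥ 1, with ∑_{n≥1} ν(n) = 1, such that G(z) = ∑_{n≥1} ν(n)·zⁿ for all z ∈ [0,1], and the probability measure ν on ℕ* is m^α-invariant. -/

import Mathlib

/-!
Write `f` and `H` for the generating functions of `q` and `νmin`. For a summable measure `ν` on `ℕ*`
with generating function `G`, `λ`-invariance amounts to the functional equation
`1 - G ∘ f = λ (1 - G)` on `(0, 1)`, because power series coefficients are determined by the values
on `(0, 1)` (isolated zeros). For `νmin` it reads `1 - H ∘ f = m (1 - H)`, so raising it to the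
power `α` shows that `G = 1 - (1 - H) ^ α` satisfies it with `λ = m ^ α`. And `G` is a generating
function: `1 - (1 - x) ^ α` has nonnegative (Sibuya) coefficients summing to `1` (binomial series
and Abel's theorem), so `G` generates the compound law of `N` independent `νmin`-variables with `N`
Sibuya-distributed.
-/

open MeasureTheory Real Set

/-- `convPow q i j` is the `i`-fold convolution power of the offspring distribution `q`
evaluated at `j`, i.e. the transition matrix `P₀(i,j)` of the BGW process. -/
noncomputable def convPow (q : ℕ → ℝ) : ℕ → ℕ → ℝ
  | 0, j => if j = 0 then 1 else 0
  | i + 1, j => ∑ k ∈ Finset.range (j + 1), convPow q i (j - k) * q k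

/-- `ν` is a `lam`-invariant measure on `ℕ* = {1,2,…}` of the BGW process killed at 0. -/
def IsInvMeasure (q : ℕ → ℝ) (lam : ℝ) (ν : ℕ → ℝ) : Prop :=
  (∀ n, 0 ≤ ν n) ∧ ν 0 = 0 ∧
  ∀ j : ℕ, 1 ≤ j →
    Summable (fun i => ν i * convPow q i j) ∧
    ∑' i, ν i * convPow q i j = lam * ν j

open Filter Topology

section PowerSeries

lemma Summable.mul_pow_of_abs_le_one {a : ℕ → ℝ} (ha : Summable a) {z : ℝ} (hz : |z| ≤ 1) :
    Summable fun n => a n * z ^ n :=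
  ha.abs.of_norm_bounded fun n => by
    rw [Real.norm_eq_abs, abs_mul, abs_pow]
    exact mul_le_of_le_one_right (abs_nonneg _) (pow_le_one₀ (abs_nonneg z) hz)

lemma tsum_mul_pow_mem_Icc {a : ℕ → ℝ} (ha : ∀ n, 0 ≤ a n) (ha1 : HasSum a 1) {z : ℝ}
    (hz : z ∈ Icc (0 : ℝ) 1) : ∑' n, a n * z ^ n ∈ Icc (0 : ℝ) 1 := by
  refine ⟨tsum_nonneg fun n => mul_nonneg (ha n) (pow_nonneg hz.1 n), ?_⟩
  calc ∑' n, a n * z ^ n ≤ ∑' n, a n :=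
        (ha1.summable.mul_pow_of_abs_le_one ((abs_of_nonneg hz.1).le.trans hz.2)).tsum_le_tsum
          (fun n => mul_le_of_le_one_right (ha n) (pow_le_one₀ hz.1 hz.2)) ha1.summable
    _ = 1 := ha1.tsum_eq

lemma hasSum_mul_zero_pow (a : ℕ → ℝ) : HasSum (fun n => a n * 0 ^ n) (a 0) := by
  convert hasSum_single (f := fun n => a n * 0 ^ n) 0 fun n hn => by simp [hn] using 1
  simp

lemma eq_zero_of_hasSum_mul_pow_eq_zero {c : ℕ → ℝ} (hc : Summable c)
    (h : ∀ z ∈ Ioo (0 : ℝ) 1, HasSum (fun n => c n * z ^ n) 0) : c = 0 := by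
  set p := FormalMultilinearSeries.ofScalars ℝ c
  have hr : ((1 : NNReal) : ENNReal) ≤ p.radius :=
    p.le_radius_of_summable_norm <| by
      simpa [p, FormalMultilinearSeries.ofScalars_norm] using hc.norm
  have hp : HasFPowerSeriesAt p.sum p 0 :=
    (p.hasFPowerSeriesOnBall (lt_of_lt_of_le one_pos hr)).hasFPowerSeriesAt
  have hpos : ∀ᶠ z in 𝓝[>] (0 : ℝ), p.sum z = 0 :=
    Filter.eventually_of_mem (Ioo_mem_nhdsGT one_pos) fun z hz => by
      have := FormalMultilinearSeries.ofScalars_sum_eq c z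
      simp only [FormalMultilinearSeries.ofScalarsSum, smul_eq_mul] at this
      rw [this, (h z hz).tsum_eq]
  have hzero : ∃ᶠ z in 𝓝[≠] (0 : ℝ), p.sum z = 0 :=
    hpos.frequently.filter_mono (nhdsWithin_mono _ fun z hz => ne_of_gt hz)
  exact (FormalMultilinearSeries.ofScalars_series_eq_zero ℝ).1
    (hp.eq_zero_of_eventually (hp.analyticAt.frequently_zero_iff_eventually_zero.1 hzero))

lemma eq_of_hasSum_mul_pow {a b : ℕ → ℝ} {f : ℝ → ℝ} (ha : Summable a) (hb : Summable b)
    (haf : ∀ z ∈ Ioo (0 : ℝ) 1, HasSum (fun n => a n * z ^ n) (f z))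
    (hbf : ∀ z ∈ Ioo (0 : ℝ) 1, HasSum (fun n => b n * z ^ n) (f z)) : a = b :=
  sub_eq_zero.1 <| eq_zero_of_hasSum_mul_pow_eq_zero (ha.sub hb) fun z hz => by
    simpa [sub_mul] using (haf z hz).sub (hbf z hz)

lemma hasSum_of_hasSum_mul_pow_of_tendsto {a : ℕ → ℝ} (ha : ∀ n, 0 ≤ a n) {f : ℝ → ℝ} {l : ℝ}
    (haf : ∀ x ∈ Ioo (0 : ℝ) 1, HasSum (fun n => a n * x ^ n) (f x))
    (hf : Tendsto f (𝓝[<] 1) (𝓝 l)) : HasSum a l := by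
  have hIoo : Ioo (0 : ℝ) 1 ∈ 𝓝[<] (1 : ℝ) := Ioo_mem_nhdsLT one_pos
  have hpartial : ∀ N, ∑ n ∈ Finset.range N, a n ≤ l := fun N => by
    have hpoly : Tendsto (fun x : ℝ => ∑ n ∈ Finset.range N, a n * x ^ n) (𝓝[<] 1)
        (𝓝 (∑ n ∈ Finset.range N, a n)) := by
      have hcont : Continuous fun x : ℝ => ∑ n ∈ Finset.range N, a n * x ^ n :=
        continuous_finsetSum _ fun n _ => continuous_const.mul (continuous_pow n)
      simpa using (hcont.tendsto 1).mono_left nhdsWithin_le_nhds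
    refine le_of_tendsto_of_tendsto hpoly hf (Filter.eventually_of_mem hIoo fun x hx => ?_)
    exact sum_le_hasSum _ (fun n _ => mul_nonneg (ha n) (pow_nonneg hx.1.le n)) (haf x hx)
  have hsum : Summable a := summable_of_sum_range_le ha hpartial
  have habel := Real.tendsto_tsum_powerSeries_nhdsWithin_lt hsum.hasSum.tendsto_sum_nat
  have heq : (fun x => ∑' n, a n * x ^ n) =ᶠ[𝓝[<] 1] f :=
    Filter.eventually_of_mem hIoo fun x hx => (haf x hx).tsum_eq
  rw [← tendsto_nhds_unique (habel.congr' heq) hf]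
  exact hsum.hasSum

end PowerSeries

section Sibuya

theorem Ring.choose_succ_right_eq {K : Type*} [Field K] [CharZero K] (a : K) (n : ℕ) :
    Ring.choose a (n + 1) = Ring.choose a n * (a - n) / (n + 1) := by
  simp only [Ring.choose_eq_smul, smul_eq_mul]
  rw [← Polynomial.aeval_eq_smeval, ← Polynomial.aeval_eq_smeval]
  simp [descPochhammer_succ_right, Nat.factorial_succ]
  field_simp

/-- The Sibuya distribution with parameter `α`: its generating function is `1 - (1 - x) ^ α`. -/
noncomputable def sibuya (α : ℝ) (n : ℕ) : ℝ :=
  if n = 0 then 0 else -((-1) ^ n * Ring.choose α n)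

variable {α : ℝ}

lemma sibuya_nonneg (h0 : 0 ≤ α) (h1 : α ≤ 1) (n : ℕ) : 0 ≤ sibuya α n := by
  suffices h : ∀ n : ℕ, (-1) ^ (n + 1) * Ring.choose α (n + 1) ≤ 0 by
    rcases n with _ | n
    · simp [sibuya]
    · simpa [sibuya] using h n
  intro n
  induction n with
  | zero => simp [h0]
  | succ n ih =>
    have hrec : (-1 : ℝ) ^ (n + 1 + 1) * Ring.choose α (n + 1 + 1)
        = (-1) ^ (n + 1) * Ring.choose α (n + 1) * ((n + 1 - α) / (n + 2)) := by
      rw [Ring.choose_succ_right_eq]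
      push_cast
      ring
    rw [hrec]
    exact mul_nonpos_of_nonpos_of_nonneg ih (div_nonneg (by linarith) (by positivity))

lemma hasSum_sibuya_mul_pow_of_abs_lt_one {x : ℝ} (hx : |x| < 1) :
    HasSum (fun n => sibuya α n * x ^ n) (1 - (1 - x) ^ α) := by
  have hbinom := Real.one_add_rpow_hasFPowerSeriesOnBall_zero (a := α).hasSum (y := -x)
    (by simpa [Metric.mem_eball, edist_dist, Real.dist_eq] using hx)
  simp only [binomialSeries, FormalMultilinearSeries.ofScalars_apply_eq, smul_eq_mul] at hbinom
  rw [zero_add, ← sub_eq_add_neg] at hbinom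
  have hterm : ∀ n, sibuya α n * x ^ n = (if n = 0 then 1 else 0) - Ring.choose α n * (-x) ^ n := by
    rintro (_ | n)
    · simp [sibuya]
    · simp [sibuya, neg_pow x]
      ring
  simp_rw [hterm]
  exact (hasSum_ite_eq 0 (1 : ℝ)).sub hbinom

lemma hasSum_sibuya (h0 : 0 < α) (h1 : α ≤ 1) : HasSum (sibuya α) 1 := by
  refine hasSum_of_hasSum_mul_pow_of_tendsto (sibuya_nonneg h0.le h1)
    (fun x hx => hasSum_sibuya_mul_pow_of_abs_lt_one ((abs_of_pos hx.1).trans_lt hx.2)) ?_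
  have hcont : Continuous fun x : ℝ => 1 - (1 - x) ^ α :=
    continuous_const.sub ((continuous_const.sub continuous_id).rpow_const fun _ => Or.inr h0.le)
  simpa [Real.zero_rpow h0.ne'] using (hcont.tendsto 1).mono_left nhdsWithin_le_nhds

lemma hasSum_sibuya_mul_pow (h0 : 0 < α) (h1 : α ≤ 1) {x : ℝ} (hx : x ∈ Icc (0 : ℝ) 1) :
    HasSum (fun n => sibuya α n * x ^ n) (1 - (1 - x) ^ α) := by
  rcases hx.2.lt_or_eq with hlt | rfl
  · exact hasSum_sibuya_mul_pow_of_abs_lt_one ((abs_of_nonneg hx.1).trans_lt hlt)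
  · simpa [Real.zero_rpow h0.ne'] using hasSum_sibuya h0 h1

end Sibuya

section Compound

lemma convPow_nonneg {q : ℕ → ℝ} (hq : ∀ k, 0 ≤ q k) (i j : ℕ) : 0 ≤ convPow q i j := by
  induction i generalizing j with
  | zero => unfold convPow; split_ifs <;> norm_num
  | succ i ih => exact Finset.sum_nonneg fun k _ => mul_nonneg (ih _) (hq k)

lemma hasSum_convPow_mul_pow {q : ℕ → ℝ} {z : ℝ} (hq : Summable fun k => q k * z ^ k) (i : ℕ) :
    HasSum (fun j => convPow q i j * z ^ j) ((∑' k, q k * z ^ k) ^ i) := by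
  induction i with
  | zero =>
    have hδ : (fun j => convPow q 0 j * z ^ j) = fun j => if j = 0 then 1 else 0 := by
      funext j
      by_cases hj : j = 0 <;> simp [convPow, hj]
    rw [hδ, pow_zero]
    exact hasSum_ite_eq 0 (1 : ℝ)
  | succ i ih =>
    have hcauchy : ∀ n,
        ∑ k ∈ Finset.range (n + 1), q k * z ^ k * (convPow q i (n - k) * z ^ (n - k))
          = convPow q (i + 1) n * z ^ n := fun n => by
      simp only [convPow, Finset.sum_mul]
      refine Finset.sum_congr rfl fun k hk => ?_
      rw [← pow_sub_mul_pow z (Nat.lt_succ_iff.mp (Finset.mem_range.mp hk))]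
      ring
    have hq' : Summable fun k => ‖q k * z ^ k‖ := hq.norm
    have hi : Summable fun j => ‖convPow q i j * z ^ j‖ := ih.summable.norm
    have hprod := tsum_mul_tsum_eq_tsum_sum_range_of_summable_norm hq' hi
    simp only [hcauchy, ih.tsum_eq, ← pow_succ'] at hprod
    rw [hprod]
    exact ((summable_norm_sum_mul_range_of_summable_norm hq' hi).of_norm.congr hcauchy).hasSum

lemma hasSum_tsum_swap_of_nonneg {β γ : Type*} {F : β → γ → ℝ} (hF : ∀ k n, 0 ≤ F k n)
    {g : β → ℝ} {S : ℝ} (hrow : ∀ k, HasSum (F k) (g k)) (hS : HasSum g S) :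
    (∀ n, Summable fun k => F k n) ∧ HasSum (fun n => ∑' k, F k n) S := by
  have hsum : Summable (Function.uncurry F) :=
    (summable_prod_of_nonneg fun p => hF p.1 p.2).2
      ⟨fun k => (hrow k).summable,
        by simpa only [Function.uncurry, (hrow _).tsum_eq] using hS.summable⟩
  have hF_S : HasSum (Function.uncurry F) S := by
    rw [← (hsum.hasSum.prod_fiberwise hrow).unique hS]
    exact hsum.hasSum
  have hswap : HasSum (Function.uncurry F ∘ Prod.swap) S :=
    (Equiv.prodComm γ β).hasSum_iff.2 hF_S
  have hcol : ∀ n, Summable fun k => F k n := hswap.summable.prod_factor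
  exact ⟨hcol, hswap.prod_fiberwise fun n => (hcol n).hasSum⟩

/-- The law of a sum of `N` independent copies of `μ`, where `N` has law `c`. -/
noncomputable def compound (c μ : ℕ → ℝ) (n : ℕ) : ℝ :=
  ∑' k, c k * convPow μ k n

variable {c μ : ℕ → ℝ}

lemma compound_nonneg (hc : ∀ k, 0 ≤ c k) (hμ : ∀ n, 0 ≤ μ n) (n : ℕ) : 0 ≤ compound c μ n :=
  tsum_nonneg fun k => mul_nonneg (hc k) (convPow_nonneg hμ k n)

lemma hasSum_mul_convPow_mul_pow (hc : ∀ k, 0 ≤ c k) (hμ : ∀ n, 0 ≤ μ n) {z x y : ℝ}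
    (hz : 0 ≤ z) (hμz : HasSum (fun n => μ n * z ^ n) x) (hcx : HasSum (fun k => c k * x ^ k) y) :
    (∀ n, Summable fun k => c k * convPow μ k n * z ^ n) ∧
      HasSum (fun n => ∑' k, c k * convPow μ k n * z ^ n) y := by
  refine hasSum_tsum_swap_of_nonneg
    (fun k n => mul_nonneg (mul_nonneg (hc k) (convPow_nonneg hμ k n)) (pow_nonneg hz n))
    (fun k => ?_) hcx
  simpa only [mul_assoc, hμz.tsum_eq] using (hasSum_convPow_mul_pow hμz.summable k).mul_left (c k)

lemma hasSum_compound_mul_pow (hc : ∀ k, 0 ≤ c k) (hμ : ∀ n, 0 ≤ μ n) {z x y : ℝ}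
    (hz : 0 ≤ z) (hμz : HasSum (fun n => μ n * z ^ n) x) (hcx : HasSum (fun k => c k * x ^ k) y) :
    HasSum (fun n => compound c μ n * z ^ n) y := by
  simpa only [compound, tsum_mul_right] using (hasSum_mul_convPow_mul_pow hc hμ hz hμz hcx).2

lemma summable_mul_convPow (hc : ∀ k, 0 ≤ c k) (hμ : ∀ n, 0 ≤ μ n) {x : ℝ} (hμx : HasSum μ x)
    (hcx : Summable fun k => c k * x ^ k) (n : ℕ) : Summable fun k => c k * convPow μ k n := by
  simpa using (hasSum_mul_convPow_mul_pow hc hμ zero_le_one (by simpa using hμx) hcx.hasSum).1 n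

end Compound

section Invariance

variable {q ν : ℕ → ℝ} {lam : ℝ}

lemma hasSum_compound_mul_pow_comp (hq0 : ∀ k, 0 ≤ q k) (hq1 : HasSum q 1) (hν0 : ∀ n, 0 ≤ ν n)
    (hν : Summable ν) {z : ℝ} (hz : z ∈ Icc (0 : ℝ) 1) :
    HasSum (fun j => compound ν q j * z ^ j) (∑' n, ν n * (∑' k, q k * z ^ k) ^ n) := by
  have hfz := tsum_mul_pow_mem_Icc hq0 hq1 hz
  exact hasSum_compound_mul_pow hν0 hq0 hz.1
    (hq1.summable.mul_pow_of_abs_le_one ((abs_of_nonneg hz.1).le.trans hz.2)).hasSum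
    (hν.mul_pow_of_abs_le_one ((abs_of_nonneg hfz.1).le.trans hfz.2)).hasSum

lemma hasSum_ite_add_mul_mul_pow (hν : Summable ν) {z : ℝ} (hz : |z| ≤ 1) (c : ℝ) :
    HasSum (fun j => ((if j = 0 then c else 0) + lam * ν j) * z ^ j)
      (c + lam * ∑' n, ν n * z ^ n) := by
  have hterm : ∀ j, ((if j = 0 then c else 0) + lam * ν j) * z ^ j
      = (if j = 0 then c else 0) + lam * (ν j * z ^ j) := by
    rintro (_ | j) <;> simp [mul_assoc]
  simp_rw [hterm]
  exact (hasSum_ite_eq 0 c).add ((hν.mul_pow_of_abs_le_one hz).hasSum.mul_left lam)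

lemma IsInvMeasure.one_sub_tsum_comp (hν : IsInvMeasure q lam ν) (hq0 : ∀ k, 0 ≤ q k)
    (hq1 : HasSum q 1) (hν1 : HasSum ν 1) {z : ℝ} (hz : z ∈ Icc (0 : ℝ) 1) :
    1 - ∑' n, ν n * (∑' k, q k * z ^ k) ^ n = lam * (1 - ∑' n, ν n * z ^ n) := by
  obtain ⟨hν0, hν00, hinv⟩ := hν
  have hcompound : ∀ j, compound ν q j = (if j = 0 then compound ν q 0 else 0) + lam * ν j := by
    rintro (_ | j)
    · simp [hν00]
    · simpa [compound] using (hinv (j + 1) j.succ_pos).2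
  have hcomp : ∀ z ∈ Icc (0 : ℝ) 1,
      ∑' n, ν n * (∑' k, q k * z ^ k) ^ n = compound ν q 0 + lam * ∑' n, ν n * z ^ n := by
    intro z hz
    refine (hasSum_compound_mul_pow_comp hq0 hq1 hν0 hν1.summable hz).unique ?_
    convert hasSum_ite_add_mul_mul_pow hν1.summable ((abs_of_nonneg hz.1).le.trans hz.2) _
      using 2 with j
    rw [hcompound j]
  have hone := hcomp 1 ⟨zero_le_one, le_rfl⟩
  simp only [one_pow, mul_one, hq1.tsum_eq, hν1.tsum_eq] at hone
  rw [hcomp z hz]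
  linarith

lemma isInvMeasure_of_one_sub_tsum_comp (hq0 : ∀ k, 0 ≤ q k) (hq1 : HasSum q 1)
    (hν0 : ∀ n, 0 ≤ ν n) (hν00 : ν 0 = 0) (hν : Summable ν)
    (h : ∀ z ∈ Ioo (0 : ℝ) 1,
      1 - ∑' n, ν n * (∑' k, q k * z ^ k) ^ n = lam * (1 - ∑' n, ν n * z ^ n)) :
    IsInvMeasure q lam ν := by
  set b : ℕ → ℝ := fun j => (if j = 0 then 1 - lam else 0) + lam * ν j
  have hA : Summable (compound ν q) := by
    simpa using (hasSum_compound_mul_pow_comp hq0 hq1 hν0 hν ⟨zero_le_one, le_rfl⟩).summable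
  have hb : Summable b := by
    simpa using (hasSum_ite_add_mul_mul_pow (lam := lam) hν (z := 1) (by simp) (1 - lam)).summable
  have hcompound : compound ν q = b := by
    refine eq_of_hasSum_mul_pow hA hb
      (fun z hz => hasSum_compound_mul_pow_comp hq0 hq1 hν0 hν (Ioo_subset_Icc_self hz))
      (fun z hz => ?_)
    rw [show ∑' n, ν n * (∑' k, q k * z ^ k) ^ n = 1 - lam + lam * ∑' n, ν n * z ^ n by
      linarith [h z hz]]
    exact hasSum_ite_add_mul_mul_pow hν ((abs_of_pos hz.1).le.trans hz.2.le) _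
  refine ⟨hν0, hν00, fun j hj => ⟨summable_mul_convPow hν0 hq0 hq1 (by simpa using hν) j, ?_⟩⟩
  simpa [b, compound, Nat.one_le_iff_ne_zero.1 hj] using congrFun hcompound j

end Invariance

theorem seneta_vere_jones_qsd_general
    (q : ℕ → ℝ) (hq0 : ∀ k, 0 ≤ q k) (hq1 : HasSum q 1)
    (m : ℝ) (hm0 : 0 < m)
    (νmin : ℕ → ℝ) (hmin : IsInvMeasure q m νmin) (hmin1 : HasSum νmin 1)
    (α : ℝ) (hα : α ∈ Set.Ioo (0 : ℝ) 1) :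
    ∃ ν : ℕ → ℝ, (∀ n, 0 ≤ ν n) ∧ ν 0 = 0 ∧ HasSum ν 1 ∧
      (∀ z ∈ Set.Icc (0 : ℝ) 1,
        HasSum (fun n => ν n * z ^ n) (1 - (1 - ∑' n, νmin n * z ^ n) ^ α)) ∧
      IsInvMeasure q (m ^ α) ν := by
  obtain ⟨hα0, hα1⟩ := hα
  have hsibuya0 := sibuya_nonneg hα0.le hα1.le
  have hG : ∀ z ∈ Icc (0 : ℝ) 1, HasSum (fun n => compound (sibuya α) νmin n * z ^ n)
      (1 - (1 - ∑' n, νmin n * z ^ n) ^ α) := fun z hz =>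
    hasSum_compound_mul_pow hsibuya0 hmin.1 hz.1
      (hmin1.summable.mul_pow_of_abs_le_one ((abs_of_nonneg hz.1).le.trans hz.2)).hasSum
      (hasSum_sibuya_mul_pow hα0 hα1.le (tsum_mul_pow_mem_Icc hmin.1 hmin1 hz))
  have hν1 : HasSum (compound (sibuya α) νmin) 1 := by
    simpa [hmin1.tsum_eq, zero_rpow hα0.ne'] using hG 1 ⟨zero_le_one, le_rfl⟩
  have hν00 : compound (sibuya α) νmin 0 = 0 := by
    simpa [(hasSum_mul_zero_pow νmin).tsum_eq, hmin.2.1] using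
      (hasSum_mul_zero_pow _).unique (hG 0 ⟨le_rfl, zero_le_one⟩)
  have hν0 := compound_nonneg hsibuya0 hmin.1
  refine ⟨_, hν0, hν00, hν1, hG, isInvMeasure_of_one_sub_tsum_comp hq0 hq1 hν0 hν00
    hν1.summable fun z hz => ?_⟩
  have hz' : z ∈ Icc (0 : ℝ) 1 := Ioo_subset_Icc_self hz
  rw [(hG _ (tsum_mul_pow_mem_Icc hq0 hq1 hz')).tsum_eq, (hG z hz').tsum_eq,
    hmin.one_sub_tsum_comp hq0 hq1 hmin1 hz',
    mul_rpow hm0.le (sub_nonneg.2 (tsum_mul_pow_mem_Icc hmin.1 hmin1 hz').2)]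
  ring

theorem seneta_vere_jones_qsd
    (q : ℕ → ℝ) (hq0 : ∀ k, 0 ≤ q k) (hq1 : HasSum q 1)
    (m : ℝ) (hm : HasSum (fun k : ℕ => (k : ℝ) * q k) m) (hm0 : 0 < m) (hm1 : m < 1)
    (νmin : ℕ → ℝ) (hmin : IsInvMeasure q m νmin) (hmin1 : HasSum νmin 1)
    (α : ℝ) (hα : α ∈ Set.Ioo (0 : ℝ) 1) :
    ∃ ν : ℕ → ℝ, (∀ n, 0 ≤ ν n) ∧ ν 0 = 0 ∧ HasSum ν 1 ∧
      (∀ z ∈ Set.Icc (0 : ℝ) 1,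
        HasSum (fun n => ν n * z ^ n) (1 - (1 - ∑' n, νmin n * z ^ n) ^ α)) ∧
      IsInvMeasure q (m ^ α) ν :=
  seneta_vere_jones_qsd_general q hq0 hq1 m hm0 νmin hmin hmin1 α hα
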